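/- Let t ≥ 1 and let G be a graph containing a set X of t+1 vertices such that every pair of vertices of X cannot be separated by an edge cut of order less than t². Then G admits a weak immersion of the complete graph K_t. -/

import Mathlib

open Sym2

/-- A finite multigraph: finite vertex and edge types, each edge has an
unordered pair of endpoints, and there are no loops. -/
structure Multigraph where
  V : Type
  E : Type
  finV : Finite V
  finE : Finite E
  ends : E → Sym2 V
  no_loops : ∀ e, ¬ (ends e).IsDiag

attribute [instance] Multigraph.finV Multigraph.finE

namespace Multigraph

/-- `IsWalk G vs es`: `vs` is the vertex sequence and `es` the edge sequence of a
walk in `G`. -/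
inductive IsWalk (G : Multigraph) : List G.V → List G.E → Prop
  | nil (v : G.V) : IsWalk G [v] []
  | cons {v : G.V} {vs : List G.V} {es : List G.E} (u : G.V) (e : G.E)
      (he : G.ends e = s(u, v)) (hw : IsWalk G (v :: vs) es) :
      IsWalk G (u :: v :: vs) (e :: es)

/-- A path from `a` to `b` in the multigraph `G`, given by its vertex sequence `vs`
and edge sequence `es`. -/
def IsPathBetween (G : Multigraph) (a b : G.V) (vs : List G.V) (es : List G.E) : Prop :=
  G.IsWalk vs es ∧ vs.Nodup ∧ vs.head? = some a ∧ vs.getLast? = some b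

/-- A weak immersion of `H` into `G`. -/
structure WeakImmersion (H G : Multigraph) where
  vmap : H.V → G.V
  vmap_inj : Function.Injective vmap
  pverts : H.E → List G.V
  pedges : H.E → List G.E
  is_path : ∀ f : H.E, ∃ x y : H.V, H.ends f = s(x, y) ∧
    G.IsPathBetween (vmap x) (vmap y) (pverts f) (pedges f)
  edge_disjoint : ∀ f f' : H.E, f ≠ f' → ∀ e, e ∈ pedges f → e ∉ pedges f'

/-- `G.Immerses H`: `G` admits a weak immersion of `H`. -/
def Immerses (G H : Multigraph) : Prop := Nonempty (WeakImmersion H G)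

/-- The degree of a vertex: the number of edges incident with it. -/
noncomputable def degree (G : Multigraph) (v : G.V) : ℕ :=
  Nat.card {e : G.E // v ∈ G.ends e}

/-- The edge cut `δ(U)`: edges with exactly one endpoint in `U`. -/
def edgeCut (G : Multigraph) (U : Set G.V) : Set G.E :=
  {e | ∃ a b, G.ends e = s(a, b) ∧ a ∈ U ∧ b ∉ U}

/-- There exist `k` pairwise edge-disjoint paths from `a` to `b` in `G`. -/
def EdgeDisjointPaths (G : Multigraph) (a b : G.V) (k : ℕ) : Prop :=
  ∃ (vs : Fin k → List G.V) (es : Fin k → List G.E),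
    (∀ i, G.IsPathBetween a b (vs i) (es i)) ∧
    ∀ i j, i ≠ j → ∀ e, e ∈ es i → e ∉ es j

/-- Isomorphism of multigraphs. -/
structure Iso (G H : Multigraph) where
  vmap : G.V ≃ H.V
  emap : G.E ≃ H.E
  ends_map : ∀ e, H.ends (emap e) = Sym2.map vmap (G.ends e)

/-- The complete graph `K_t` as a multigraph. -/
def completeGraph (t : ℕ) : Multigraph where
  V := Fin t
  E := {p : Sym2 (Fin t) // ¬ p.IsDiag}
  finV := inferInstance
  finE := inferInstance
  ends := Subtype.val
  no_loops := fun e => e.prop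

/-- The multigraph `S_{k,n}`: vertices `x_1, …, x_n, y` (with `y = none`) and `k`
parallel edges from each `x_i` to `y`. -/
def star (k n : ℕ) : Multigraph where
  V := Option (Fin n)
  E := Fin n × Fin k
  finV := inferInstance
  finE := inferInstance
  ends := fun p => s(some p.1, none)
  no_loops := fun p => by simp [Sym2.mk_isDiag_iff]

/-! ### Edge sums -/

/-- A witness that `G` is a `k`-edge sum of `G₁` and `G₂`. -/
structure EdgeSumWitness (k : ℕ) (G G₁ G₂ : Multigraph) where
  v₁ : G₁.V
  v₂ : G₂.V
  deg₁ : G₁.degree v₁ = k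
  deg₂ : G₂.degree v₂ = k
  π : {e : G₁.E // v₁ ∈ G₁.ends e} ≃ {e : G₂.E // v₂ ∈ G₂.ends e}
  α : G.V ≃ {x : G₁.V // x ≠ v₁} ⊕ {y : G₂.V // y ≠ v₂}
  β : G.E ≃ ({e : G₁.E // v₁ ∉ G₁.ends e} ⊕ {e : G₂.E // v₂ ∉ G₂.ends e}) ⊕
      {e : G₁.E // v₁ ∈ G₁.ends e}
  ends₁ : ∀ (e : {e : G₁.E // v₁ ∉ G₁.ends e}) (x y : G₁.V) (hx : x ≠ v₁) (hy : y ≠ v₁),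
    G₁.ends e.val = s(x, y) →
      G.ends (β.symm (Sum.inl (Sum.inl e))) = s(α.symm (Sum.inl ⟨x, hx⟩), α.symm (Sum.inl ⟨y, hy⟩))
  ends₂ : ∀ (e : {e : G₂.E // v₂ ∉ G₂.ends e}) (x y : G₂.V) (hx : x ≠ v₂) (hy : y ≠ v₂),
    G₂.ends e.val = s(x, y) →
      G.ends (β.symm (Sum.inl (Sum.inr e))) = s(α.symm (Sum.inr ⟨x, hx⟩), α.symm (Sum.inr ⟨y, hy⟩))
  ends₃ : ∀ (e : {e : G₁.E // v₁ ∈ G₁.ends e}) (x : G₁.V) (y : G₂.V) (hx : x ≠ v₁) (hy : y ≠ v₂),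
    G₁.ends e.val = s(x, v₁) → G₂.ends (π e).val = s(y, v₂) →
      G.ends (β.symm (Sum.inr e)) = s(α.symm (Sum.inl ⟨x, hx⟩), α.symm (Sum.inr ⟨y, hy⟩))

/-- `G` is a `k`-edge sum of `G₁` and `G₂`. -/
def IsEdgeSum (k : ℕ) (G G₁ G₂ : Multigraph) : Prop :=
  Nonempty (EdgeSumWitness k G G₁ G₂)

/-- The edge sum is grounded. -/
def EdgeSumWitness.Grounded {k : ℕ} {G G₁ G₂ : Multigraph}
    (w : EdgeSumWitness k G G₁ G₂) : Prop :=
  (∃ v', v' ≠ w.v₁ ∧ G₁.EdgeDisjointPaths w.v₁ v' k) ∧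
  (∃ v', v' ≠ w.v₂ ∧ G₂.EdgeDisjointPaths w.v₂ v' k)

/-- `G` is a grounded `k`-edge sum of `G₁` and `G₂`. -/
def IsGroundedEdgeSum (k : ℕ) (G G₁ G₂ : Multigraph) : Prop :=
  ∃ w : EdgeSumWitness k G G₁ G₂, w.Grounded

/-! ### Auxiliary simple-graph operations -/

/-- Delete the vertex `t` from `T` (keeping it as an isolated vertex). -/
def delAt {τ : Type} (T : SimpleGraph τ) (t : τ) : SimpleGraph τ where
  Adj a b := T.Adj a b ∧ a ≠ t ∧ b ≠ t
  symm := ⟨fun a b h => ⟨h.1.symm, h.2.2, h.2.1⟩⟩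
  loopless := ⟨fun a h => T.loopless.irrefl a h.1⟩

lemma reach_delAt {τ : Type} (T : SimpleGraph τ) (t : τ) {a b : τ} (q : T.Walk a b)
    (ht : t ∉ q.support) : (delAt T t).Reachable a b := by
  induction q with
  | nil => exact SimpleGraph.Reachable.refl _
  | @cons u v w h p ih =>
      simp only [SimpleGraph.Walk.support_cons, List.mem_cons] at ht
      push_neg at ht
      have hv : v ≠ t := fun hv => ht.2 (hv ▸ p.start_mem_support)
      exact (SimpleGraph.Adj.reachable (G := delAt T t) (show (delAt T t).Adj u v from ⟨h, Ne.symm ht.1, hv⟩)).trans (ih ht.2)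

/-! ### Tree-cut decompositions -/

/-- A tree-cut decomposition of the multigraph `G`. -/
structure TreeCutDecomp (G : Multigraph) where
  T : Type
  finT : Finite T
  tree : SimpleGraph T
  isTree : tree.IsTree
  bag : T → Set G.V
  disj : ∀ s t : T, s ≠ t → Disjoint (bag s) (bag t)
  covers : ∀ v : G.V, ∃ t : T, v ∈ bag t

attribute [instance] TreeCutDecomp.finT

variable {G : Multigraph}

/-- The union of the bags on the `v`-side of the tree edge `uv`. -/
def TreeCutDecomp.sideSet (D : TreeCutDecomp G) (u v : D.T) : Set G.V :=
  {x | ∃ s, (D.tree.deleteEdges {s(u, v)}).Reachable v s ∧ x ∈ D.bag s}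

/-- The adhesion of a tree-cut decomposition. -/
noncomputable def TreeCutDecomp.adhesion (D : TreeCutDecomp G) : ℕ :=
  sSup {n | ∃ u v : D.T, D.tree.Adj u v ∧ n = (G.edgeCut (D.sideSet u v)).ncard}

lemma TreeCutDecomp.exists_periph (D : TreeCutDecomp G) (t : D.T) (v : G.V)
    (hv : v ∉ D.bag t) :
    ∃ u : D.T, D.tree.Adj t u ∧ ∃ s, v ∈ D.bag s ∧ (delAt D.tree t).Reachable s u := by
  classical
  obtain ⟨s, hs⟩ := D.covers v
  have hst : t ≠ s := fun h => hv (h ▸ hs)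
  obtain ⟨w⟩ := D.isTree.isConnected.preconnected t s
  obtain ⟨x, hadj, q, hq⟩ := SimpleGraph.Walk.exists_eq_cons_of_ne hst w.toPath.val
  have hP : (SimpleGraph.Walk.cons hadj q).IsPath := hq ▸ w.toPath.prop
  rw [SimpleGraph.Walk.cons_isPath_iff] at hP
  exact ⟨x, hadj, s, hs, (reach_delAt D.tree t q hP.2).symm⟩

open Classical in
/-- The map from `G` to the vertices of the torso at `t`. -/
noncomputable def TreeCutDecomp.proj (D : TreeCutDecomp G) (t : D.T) (v : G.V) :
    ↥(D.bag t) ⊕ {u : D.T // D.tree.Adj t u} :=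
  if hv : v ∈ D.bag t then Sum.inl ⟨v, hv⟩
  else Sum.inr ⟨(D.exists_periph t v hv).choose, (D.exists_periph t v hv).choose_spec.1⟩

/-- The torso of `G` at a node `t` of a tree-cut decomposition. -/
noncomputable def TreeCutDecomp.torso (D : TreeCutDecomp G) (t : D.T) : Multigraph where
  V := ↥(D.bag t) ⊕ {u : D.T // D.tree.Adj t u}
  E := {e : G.E // ¬ (Sym2.map (D.proj t) (G.ends e)).IsDiag}
  finV := inferInstance
  finE := inferInstance
  ends := fun e => Sym2.map (D.proj t) (G.ends e.val)
  no_loops := fun e => e.prop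

/-- The core vertices of the torso at `t`. -/
def TreeCutDecomp.torsoCore (D : TreeCutDecomp G) (t : D.T) : Set (D.torso t).V :=
  Set.range Sum.inl

/-! ### The 3-center and tree-cut width -/

/-- Condition (1): the immersion of `H` in `G` covers `X` and every vertex of `H`
of degree at most two is mapped into `X`. -/
def CenterCond (G : Multigraph) (X : Set G.V) (H : Multigraph) (I : WeakImmersion H G) : Prop :=
  X ⊆ Set.range I.vmap ∧ ∀ x : H.V, H.degree x ≤ 2 → I.vmap x ∈ X

/-- `C` is a 3-center of `(G, X)`: it admits an immersion in `G` satisfying (1) and is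
maximal with respect to immersion containment among all such graphs. -/
def IsThreeCenter (G : Multigraph) (X : Set G.V) (C : Multigraph) : Prop :=
  (∃ I : WeakImmersion C G, CenterCond G X C I) ∧
  ∀ H : Multigraph, (∃ I : WeakImmersion H G, CenterCond G X H I) → C.Immerses H

/-- The number of vertices of the 3-center of `(G, X)`. -/
noncomputable def threeCenterCard (G : Multigraph) (X : Set G.V) : ℕ :=
  sSup {n | ∃ C : Multigraph, IsThreeCenter G X C ∧ Nat.card C.V = n}

/-- The width of a tree-cut decomposition. -/
noncomputable def TreeCutDecomp.width (D : TreeCutDecomp G) : ℕ :=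
  max D.adhesion (sSup {n | ∃ t : D.T, n = threeCenterCard (D.torso t) (D.torsoCore t)})

/-- The tree-cut width of a multigraph. -/
noncomputable def tcw (G : Multigraph) : ℕ :=
  sInf {w | ∃ D : TreeCutDecomp G, D.width = w}

/-! ### Tree decompositions and tree-width -/

/-- A tree decomposition of the multigraph `G`. -/
structure TreeDecomp (G : Multigraph) where
  T : Type
  finT : Finite T
  tree : SimpleGraph T
  isTree : tree.IsTree
  bag : T → Set G.V
  covers_v : ∀ v : G.V, ∃ t : T, v ∈ bag t
  covers_e : ∀ e : G.E, ∃ (t : T) (x y : G.V), G.ends e = s(x, y) ∧ x ∈ bag t ∧ y ∈ bag t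
  connected : ∀ v : G.V, (SimpleGraph.induce {t : T | v ∈ bag t} tree).Connected

/-- The tree-width of a multigraph. -/
noncomputable def treewidth (G : Multigraph) : ℕ :=
  sInf {n | ∃ D : TreeDecomp G, ∀ t : D.T, (D.bag t).ncard ≤ n + 1}

/-! ### Walls and grids -/

def wallStep (r : ℕ) (a b : Fin r × Fin r) : Prop :=
  (a.1 = b.1 ∧ a.2.val + 1 = b.2.val) ∨
  (a.2 = b.2 ∧ a.1.val + 1 = b.1.val ∧ (a.1.val + 1) % 2 = (a.2.val + 1) % 2)

def wallAdj (r : ℕ) (a b : Fin r × Fin r) : Prop := wallStep r a b ∨ wallStep r b a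

lemma wallStep_ne {r : ℕ} {a b : Fin r × Fin r} (h : wallStep r a b) : a ≠ b := by
  rintro rfl
  rcases h with ⟨-, h⟩ | ⟨-, h, -⟩ <;> omega

/-- The `r`-wall `H_r`. -/
def wall (r : ℕ) : Multigraph where
  V := Fin r × Fin r
  E := {q : Sym2 (Fin r × Fin r) // ∃ a b, q = s(a, b) ∧ wallAdj r a b}
  finV := inferInstance
  finE := inferInstance
  ends := Subtype.val
  no_loops := by
    rintro ⟨q, a, b, rfl, hab⟩ hd
    rw [Sym2.mk_isDiag_iff] at hd
    subst hd
    rcases hab with h | h <;> exact wallStep_ne h rfl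

def gridStep (r : ℕ) (a b : Fin r × Fin r) : Prop :=
  (a.1 = b.1 ∧ a.2.val + 1 = b.2.val) ∨ (a.2 = b.2 ∧ a.1.val + 1 = b.1.val)

def gridAdj (r : ℕ) (a b : Fin r × Fin r) : Prop := gridStep r a b ∨ gridStep r b a

lemma gridStep_ne {r : ℕ} {a b : Fin r × Fin r} (h : gridStep r a b) : a ≠ b := by
  rintro rfl
  rcases h with ⟨-, h⟩ | ⟨-, h⟩ <;> omega

/-- The `r × r` grid. -/
def grid (r : ℕ) : Multigraph where
  V := Fin r × Fin r
  E := {q : Sym2 (Fin r × Fin r) // ∃ a b, q = s(a, b) ∧ gridAdj r a b}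
  finV := inferInstance
  finE := inferInstance
  ends := Subtype.val
  no_loops := by
    rintro ⟨q, a, b, rfl, hab⟩ hd
    rw [Sym2.mk_isDiag_iff] at hd
    subst hd
    rcases hab with h | h <;> exact gridStep_ne h rfl

/-! ### Subdivisions and minors -/

/-- `G` contains `H` as a subdivision: an immersion whose composite paths pairwise
meet only in common endpoints. -/
def ContainsSubdivision (G H : Multigraph) : Prop :=
  ∃ I : WeakImmersion H G, ∀ f f' : H.E, f ≠ f' → ∀ v : G.V,
    v ∈ I.pverts f → v ∈ I.pverts f' →
      ((I.pverts f).head? = some v ∨ (I.pverts f).getLast? = some v) ∧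
      ((I.pverts f').head? = some v ∨ (I.pverts f').getLast? = some v)

/-- A set of vertices is connected in `G`. -/
def ConnectedIn (G : Multigraph) (B : Set G.V) : Prop :=
  B.Nonempty ∧ ∀ a ∈ B, ∀ b ∈ B, ∃ (vs : List G.V) (es : List G.E),
    G.IsWalk vs es ∧ vs.head? = some a ∧ vs.getLast? = some b ∧ ∀ v ∈ vs, v ∈ B

/-- `G` contains `H` as a minor. -/
def HasMinor (G H : Multigraph) : Prop :=
  ∃ B : H.V → Set G.V,
    (∀ x, G.ConnectedIn (B x)) ∧
    (∀ x y, x ≠ y → Disjoint (B x) (B y)) ∧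
    ∃ η : H.E → G.E, Function.Injective η ∧
      ∀ (f : H.E) (x y : H.V), H.ends f = s(x, y) →
        ∃ a b, G.ends (η f) = s(a, b) ∧ a ∈ B x ∧ b ∈ B y

/-! ### Subgraphs, splitting off, suppression -/

/-- `A` is (isomorphic to) a subgraph of `G`. -/
def IsSubgraph (A G : Multigraph) : Prop :=
  ∃ (fv : A.V → G.V) (fe : A.E → G.E), Function.Injective fv ∧ Function.Injective fe ∧
    ∀ e, G.ends (fe e) = Sym2.map fv (A.ends e)

/-- `B` is obtained from `A` by splitting off a pair of incident edges. -/
def SplitOffRel (A B : Multigraph) : Prop :=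
  ∃ (e₁ e₂ : A.E) (x y z : A.V), e₁ ≠ e₂ ∧ x ≠ z ∧
    A.ends e₁ = s(x, y) ∧ A.ends e₂ = s(y, z) ∧
    ∃ (fV : A.V ≃ B.V) (fE : {e : A.E // e ≠ e₁ ∧ e ≠ e₂} ⊕ Unit ≃ B.E),
      (∀ e : {e : A.E // e ≠ e₁ ∧ e ≠ e₂},
        B.ends (fE (Sum.inl e)) = Sym2.map fV (A.ends e.val)) ∧
      B.ends (fE (Sum.inr ())) = s(fV x, fV z)

/-- `B` is obtained from `A` by suppressing a vertex of degree two (contracting one of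
its incident edges and deleting any resulting loops). -/
def SuppressTwoRel (A B : Multigraph) : Prop :=
  ∃ v : A.V, A.degree v = 2 ∧
    ∃ σ : A.V → B.V,
      (∀ x y, x ≠ v → y ≠ v → (σ x = σ y ↔ x = y)) ∧
      (∀ y : B.V, ∃ x, x ≠ v ∧ σ x = y) ∧
      (∃ a, a ≠ v ∧ (∃ e, A.ends e = s(v, a)) ∧ σ v = σ a) ∧
      ∃ τ : {e : A.E // ¬ (Sym2.map σ (A.ends e)).IsDiag} ≃ B.E,
        ∀ e, B.ends (τ e) = Sym2.map σ (A.ends e.val)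

/-- A multigraph together with a marked set of vertices. -/
structure MarkedGraph where
  G : Multigraph
  X : Set G.V

/-- One step of suppressing a vertex outside the marked set of degree at most two
(for degree zero this deletes the vertex). -/
def SuppressStep (A B : MarkedGraph) : Prop :=
  ∃ v : A.G.V, v ∉ A.X ∧ A.G.degree v ≤ 2 ∧
    ∃ σ : A.G.V → B.G.V,
      (∀ x y, x ≠ v → y ≠ v → (σ x = σ y ↔ x = y)) ∧
      (∀ y : B.G.V, ∃ x, x ≠ v ∧ σ x = y) ∧
      B.X = {y | ∃ x, x ∈ A.X ∧ σ x = y} ∧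
      (1 ≤ A.G.degree v → ∃ a, a ≠ v ∧ (∃ e, A.G.ends e = s(v, a)) ∧ σ v = σ a) ∧
      ∃ τ : {e : A.G.E // ¬ (Sym2.map σ (A.G.ends e)).IsDiag} ≃ B.G.E,
        ∀ e, B.G.ends (τ e) = Sym2.map σ (A.G.ends e.val)

/-! ### Trees and cycles as multigraphs -/

/-- A multigraph is a tree if it corresponds to a simple tree on its vertex set. -/
def IsTreeGraph (G : Multigraph) : Prop :=
  ∃ S : SimpleGraph G.V, S.IsTree ∧ ∃ φ : G.E ≃ S.edgeSet, ∀ e, (φ e : Sym2 G.V) = G.ends e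

/-- The cycle on `n + 3` vertices. -/
def cycleGraph (n : ℕ) : Multigraph where
  V := Fin (n + 3)
  E := Fin (n + 3)
  finV := inferInstance
  finE := inferInstance
  ends := fun i => s(i, i + 1)
  no_loops := by
    intro i hd
    rw [Sym2.mk_isDiag_iff] at hd
    have h1 : (i : Fin (n + 3)) + 0 = i + 1 := by simpa using hd
    have h01 : (0 : Fin (n + 3)) = 1 := add_left_cancel h1
    have := congrArg Fin.val h01
    simp [Fin.val_one] at this

/-- A matching in a multigraph: a set of pairwise vertex-disjoint edges. -/
def IsMatching (G : Multigraph) (M : Set G.E) : Prop :=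
  ∀ e ∈ M, ∀ e' ∈ M, e ≠ e' → ∀ v : G.V, v ∈ G.ends e → v ∉ G.ends e'

end Multigraph

/-! Pick a hub `b ∈ X` and let the other `t` vertices of `X` be the branch vertices. Add a
source joined to each branch vertex `v` by one new edge for every edge of `K_t` at `v`. A cut
separating the source from `b` either separates some branch vertex from `b`, and then has at
least `t²` edges of `G`, or it contains all `t(t - 1)` new edges. By Menger's theorem there are
`t(t - 1)` edge-disjoint paths from the source to `b`; each uses exactly one new edge, so every
branch vertex `v` gets edge-disjoint paths to `b`, one for each edge `vw` of `K_t`. The edge `vw`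
is routed along the path of `v` for `vw` and back along the path of `w` for `vw`.
Menger's theorem is proved by augmenting unit flows and decomposing a maximum flow into paths. -/

/-- A walk with vertex list `vs` and edge list `es` each of whose steps `a -e→ b` satisfies
`R a b e`. -/
inductive LabelledChain {α β : Type*} (R : α → α → β → Prop) : List α → List β → Prop
  | nil (a : α) : LabelledChain R [a] []
  | cons {b : α} {as : List α} {es : List β} (a : α) (e : β) :
      R a b e → LabelledChain R (b :: as) es → LabelledChain R (a :: b :: as) (e :: es)

namespace LabelledChain

variable {α β : Type*} {R S : α → α → β → Prop} {vs : List α} {es : List β} {a b : α}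

lemma imp_of_mem (hRS : ∀ a ∈ vs, ∀ b ∈ vs, ∀ e ∈ es, R a b e → S a b e)
    (h : LabelledChain R vs es) : LabelledChain S vs es := by
  induction h with
  | nil a => exact nil a
  | cons a e hab _ ih =>
    refine cons a e (hRS _ (by simp) _ (by simp) _ (by simp) hab) (ih ?_)
    intro x hx y hy f hf
    exact hRS x (.tail _ hx) y (.tail _ hy) f (.tail _ hf)

lemma exists_rel_of_mem {e : β} (h : LabelledChain R vs es) (he : e ∈ es) :
    ∃ a ∈ vs, ∃ b ∈ vs, R a b e := by
  induction h with
  | nil a => simp at he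
  | cons a f hab _ ih =>
    rcases List.mem_cons.1 he with rfl | he
    · exact ⟨a, by simp, _, by simp, hab⟩
    · obtain ⟨x, hx, y, hy, hxy⟩ := ih he
      exact ⟨x, .tail _ hx, y, .tail _ hy, hxy⟩

lemma append {ws : List α} {fs : List β} (h₁ : LabelledChain R vs es)
    (hlast : vs.getLast? = some a) (h₂ : LabelledChain R (a :: ws) fs) :
    LabelledChain R (vs ++ ws) (es ++ fs) := by
  induction h₁ with
  | nil b =>
    cases hlast
    exact h₂
  | cons b e hb _ ih =>
    rw [List.getLast?_cons_cons] at hlast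
    exact cons b e hb (ih hlast)

lemma reverse (h : LabelledChain R vs es) :
    LabelledChain (fun a b e => R b a e) vs.reverse es.reverse := by
  induction h with
  | nil a => exact nil a
  | cons a e hab _ ih =>
    simpa using ih.append (by simp) (cons _ e hab (nil a))

lemma exists_of_reflTransGen (h : Relation.ReflTransGen (fun a b => ∃ e, R a b e) a b) :
    ∃ vs es, LabelledChain R vs es ∧ vs.head? = some a ∧ vs.getLast? = some b := by
  induction h using Relation.ReflTransGen.head_induction_on with
  | refl => exact ⟨[b], [], nil b, rfl, rfl⟩
  | head hstep _ ih =>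
    obtain ⟨e, he⟩ := hstep
    obtain ⟨vs, es, h, hhead, hlast⟩ := ih
    obtain ⟨as, rfl⟩ := List.head?_eq_some_iff.1 hhead
    exact ⟨_, _, cons _ e he h, rfl, by rwa [List.getLast?_cons_cons]⟩

lemma exists_suffix_of_mem (h : LabelledChain R vs es) (ha : a ∈ vs) :
    ∃ vs' es', LabelledChain R vs' es' ∧ vs' <:+ vs ∧ es' ⊆ es ∧
      vs'.head? = some a ∧ vs'.getLast? = vs.getLast? := by
  induction h with
  | nil b => exact ⟨[b], [], nil b, List.suffix_refl _, by simp,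
      by simp [List.mem_singleton.1 ha], rfl⟩
  | cons b e hb htail ih =>
    by_cases hab : a = b
    · exact ⟨_, _, cons b e hb htail, List.suffix_refl _, List.Subset.refl _,
        by simp [hab], rfl⟩
    · obtain ⟨vs', es', h', hsuf, hsub, hhead, hlast⟩ :=
        ih (by simpa [hab] using ha)
      exact ⟨vs', es', h', hsuf.trans (List.suffix_cons _ _),
        List.Subset.trans hsub (List.subset_cons_self _ _), hhead,
        by rw [hlast, List.getLast?_cons_cons]⟩

lemma exists_nodup (h : LabelledChain R vs es) :
    ∃ vs' es', LabelledChain R vs' es' ∧ vs'.Nodup ∧ vs'.head? = vs.head? ∧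
      vs'.getLast? = vs.getLast? ∧ es' ⊆ es := by
  induction h with
  | nil b => exact ⟨[b], [], nil b, List.nodup_singleton b, rfl, rfl, List.Subset.refl _⟩
  | cons b e hb _ ih =>
    obtain ⟨vs', es', h', hnd, hhead, hlast, hsub⟩ := ih
    by_cases hb' : b ∈ vs'
    · -- cut out the cycle through `b`
      obtain ⟨ws, fs, h'', hsuf, hsub', hhead', hlast'⟩ := h'.exists_suffix_of_mem hb'
      exact ⟨ws, fs, h'', hnd.sublist hsuf.sublist, hhead',
        by rw [hlast', hlast, List.getLast?_cons_cons],
        List.Subset.trans hsub' (List.Subset.trans hsub (List.subset_cons_self _ _))⟩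
    · obtain ⟨as, rfl⟩ := List.head?_eq_some_iff.1 hhead
      exact ⟨_, _, cons b e hb h', List.nodup_cons.2 ⟨hb', hnd⟩, rfl,
        by rw [List.getLast?_cons_cons, hlast, List.getLast?_cons_cons],
        List.cons_subset_cons _ hsub⟩

end LabelledChain

namespace Multigraph

variable {G : Multigraph}

section Walk

variable {vs : List G.V} {es : List G.E} {a b c : G.V}

lemma isWalk_iff_labelledChain :
    G.IsWalk vs es ↔ LabelledChain (fun u v e => G.ends e = s(u, v)) vs es := by
  constructor
  · intro h
    induction h with
    | nil v => exact .nil v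
    | cons u e he _ ih => exact .cons u e he ih
  · intro h
    induction h with
    | nil v => exact .nil v
    | cons u e he _ ih => exact .cons u e he ih

lemma IsWalk.reverse (h : G.IsWalk vs es) : G.IsWalk vs.reverse es.reverse := by
  refine isWalk_iff_labelledChain.2 ((isWalk_iff_labelledChain.1 h).reverse.imp_of_mem ?_)
  intro u _ v _ e _ he
  rw [he, Sym2.eq_swap]

lemma IsWalk.exists_isPathBetween (h : G.IsWalk vs es) (ha : vs.head? = some a)
    (hb : vs.getLast? = some b) : ∃ vs' es', G.IsPathBetween a b vs' es' ∧ es' ⊆ es := by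
  obtain ⟨vs', es', h', hnd, hhead, hlast, hsub⟩ :=
    (isWalk_iff_labelledChain.1 h).exists_nodup
  exact ⟨vs', es', ⟨isWalk_iff_labelledChain.2 h', hnd, hhead.trans ha, hlast.trans hb⟩, hsub⟩

lemma IsPathBetween.exists_join {vs₁ vs₂ : List G.V} {es₁ es₂ : List G.E}
    (h₁ : G.IsPathBetween a c vs₁ es₁) (h₂ : G.IsPathBetween b c vs₂ es₂) :
    ∃ vs es, G.IsPathBetween a b vs es ∧ es ⊆ es₁ ++ es₂ := by
  obtain ⟨hw₁, -, ha, hc⟩ := h₁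
  obtain ⟨hw₂, -, hb, hc'⟩ := h₂
  obtain ⟨rest, hrest⟩ := List.head?_eq_some_iff.1 (List.head?_reverse.trans hc')
  have hw := isWalk_iff_labelledChain.2 ((isWalk_iff_labelledChain.1 hw₁).append hc
    (isWalk_iff_labelledChain.1 (hrest ▸ hw₂.reverse)))
  have hlast : (c :: rest).getLast? = some b := by
    rw [← hrest, List.getLast?_reverse, hb]
  obtain ⟨vs, es, hp, hsub⟩ := hw.exists_isPathBetween
    (by rw [List.head?_append, ha]; rfl) (by
      cases rest with
      | nil => simpa [hc] using hlast
      | cons x xs => rwa [List.getLast?_append_of_ne_nil _ (List.cons_ne_nil x xs),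
          ← List.getLast?_cons_cons (a := c)])
  refine ⟨vs, es, hp, List.Subset.trans hsub ?_⟩
  exact List.append_subset.2 ⟨List.subset_append_left _ _,
    List.Subset.trans (fun _ => List.mem_reverse.1) (List.subset_append_right _ _)⟩

end Walk

section Flow

open scoped Classical

noncomputable local instance (G : Multigraph) : Fintype G.E := Fintype.ofFinite _

/-- A flow with unit capacities: each edge carries nothing, or one unit from one of its ends
to the other. -/
structure UnitFlow (G : Multigraph) where
  arc : G.E → Option (G.V × G.V)
  arc_ends : ∀ e u v, arc e = some (u, v) → G.ends e = s(u, v)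

noncomputable def arcOut {V : Type} (U : Set V) : Option (V × V) → ℤ
  | none => 0
  | some (u, v) => (if u ∈ U then 1 else 0) - (if v ∈ U then 1 else 0)

lemma arcOut_swap {V : Type} (U : Set V) (u v : V) :
    arcOut U (some (v, u)) = -arcOut U (some (u, v)) := by
  simp only [arcOut]; ring

lemma arcOut_eq_one {V : Type} {U : Set V} {u v : V} (hu : u ∈ U) (hv : v ∉ U) :
    arcOut U (some (u, v)) = 1 := by
  simp [arcOut, hu, hv]

namespace UnitFlow

variable {F : G.UnitFlow} {U : Set G.V} {u v a b : G.V} {e : G.E} {k : ℕ}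

noncomputable def netOut (F : G.UnitFlow) (U : Set G.V) : ℤ := ∑ e, arcOut U (F.arc e)

/-- `F` is a flow of value `k` from `a` to `b`: the net outflow of every set `U` is `k` if
`U` separates `a` from `b`, `-k` if it separates `b` from `a`, and `0` otherwise. -/
def HasValue (F : G.UnitFlow) (a b : G.V) (k : ℕ) : Prop :=
  ∀ U, F.netOut U = k * arcOut U (some (a, b))

/-- The residual graph of `F` has an arc `u → v` for every edge `e`: either `e` is free, or it
carries flow from `v` to `u` that can be cancelled. -/
def Residual (F : G.UnitFlow) (u v : G.V) (e : G.E) : Prop :=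
  (F.arc e = none ∧ G.ends e = s(u, v)) ∨ F.arc e = some (v, u)

lemma Residual.ends_eq (h : F.Residual u v e) : G.ends e = s(u, v) := by
  rcases h with ⟨-, h⟩ | h
  · exact h
  · rw [F.arc_ends e v u h, Sym2.eq_swap]

lemma Residual.congr {F' : G.UnitFlow} (harc : F'.arc e = F.arc e) :
    F'.Residual u v e ↔ F.Residual u v e := by
  simp only [Residual, harc]

/-- Push one unit from `u` to `v` through `e`: occupy `e` if it is free, cancel the flow on
it otherwise. -/
noncomputable def push (F : G.UnitFlow) (e : G.E) (u v : G.V) : G.UnitFlow where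
  arc := Function.update F.arc e
    (if F.arc e = none ∧ G.ends e = s(u, v) then some (u, v) else none)
  arc_ends e' x y h := by
    rcases eq_or_ne e' e with rfl | hne
    · rw [Function.update_self] at h
      split_ifs at h with hfree
      cases h
      exact hfree.2
    · exact F.arc_ends e' x y (by rwa [Function.update_of_ne hne] at h)

lemma push_arc_of_ne {e' : G.E} (hne : e' ≠ e) : (F.push e u v).arc e' = F.arc e' :=
  Function.update_of_ne hne _ _

lemma push_arc_self_of_ne_none (h : F.arc e ≠ none) : (F.push e u v).arc e = none := by
  simp [push, h]

lemma netOut_push (h : F.Residual u v e) (U : Set G.V) :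
    (F.push e u v).netOut U = F.netOut U + arcOut U (some (u, v)) := by
  have hsum : ∀ o, ∑ e', arcOut U (Function.update F.arc e o e') =
      F.netOut U + (arcOut U o - arcOut U (F.arc e)) := by
    intro o
    simp only [Function.apply_update (fun _ => arcOut U), netOut,
      Finset.sum_update_of_mem (Finset.mem_univ e), Finset.sdiff_singleton_eq_erase,
      ← Finset.add_sum_erase _ _ (Finset.mem_univ e)]
    ring
  rw [push, netOut, hsum]
  rcases h with ⟨hnone, hends⟩ | hsome
  · simp [hnone, hends, arcOut]
  · simp [hsome, arcOut]

lemma ncard_edgeCut_le_netOut (hU : ∀ u v e, u ∈ U → F.Residual u v e → v ∈ U) :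
    ((G.edgeCut U).ncard : ℤ) ≤ F.netOut U := by
  have hnonneg : ∀ e, 0 ≤ arcOut U (F.arc e) := by
    intro e
    rcases he : F.arc e with _ | ⟨x, y⟩
    · rfl
    · have := hU y x e
      simp only [Residual, he, or_true] at this
      simp only [arcOut]
      split_ifs <;> simp_all
  have hcut : ∀ e ∈ G.edgeCut U, 1 ≤ arcOut U (F.arc e) := by
    rintro e ⟨p, q, hpq, hp, hq⟩
    rcases he : F.arc e with _ | ⟨x, y⟩
    · exact absurd (hU p q e hp (.inl ⟨he, hpq⟩)) hq
    · rcases Sym2.eq_iff.1 ((F.arc_ends e x y he).symm.trans hpq) with ⟨rfl, rfl⟩ | ⟨rfl, rfl⟩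
      · simp [arcOut, hp, hq]
      · exact absurd (hU y x e hp (.inr he)) hq
  rw [Set.ncard_eq_toFinset_card', Finset.card_eq_sum_ones, Nat.cast_sum, netOut]
  calc ∑ e ∈ (G.edgeCut U).toFinset, ((1 : ℕ) : ℤ)
      ≤ ∑ e ∈ (G.edgeCut U).toFinset, arcOut U (F.arc e) :=
        Finset.sum_le_sum fun e he => by simpa using hcut e (Set.mem_toFinset.1 he)
    _ ≤ ∑ e, arcOut U (F.arc e) :=
        Finset.sum_le_sum_of_subset_of_nonneg (Finset.subset_univ _) fun e _ _ => hnonneg e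

lemma netOut_nonpos (hU : ∀ u v e, u ∈ U → F.arc e = some (u, v) → v ∈ U) :
    F.netOut U ≤ 0 := by
  refine Finset.sum_nonpos fun e _ => ?_
  rcases he : F.arc e with _ | ⟨x, y⟩
  · rfl
  · have := hU x y e
    simp only [arcOut]
    split_ifs <;> simp_all

lemma exists_augment : ∀ {vs : List G.V} {es : List G.E} {a b : G.V} (F : G.UnitFlow),
    LabelledChain F.Residual vs es → vs.Nodup → vs.head? = some a → vs.getLast? = some b →
    ∃ F' : G.UnitFlow, (∀ U, F'.netOut U = F.netOut U + arcOut U (some (a, b))) ∧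
      (∀ e ∉ es, F'.arc e = F.arc e) ∧ ∀ e ∈ es, F.arc e ≠ none → F'.arc e = none
  | _, _, a, b, F, .nil _, _, ha, hb => by
    simp only [List.head?_cons, List.getLast?_singleton, Option.some.injEq] at ha hb
    subst ha hb
    exact ⟨F, fun U => by simp [arcOut], fun _ _ => rfl, by simp⟩
  | u :: v :: vs, e :: es, a, b, F, .cons _ _ huv htail, hnd, ha, hb => by
    cases ha
    rw [List.getLast?_cons_cons] at hb
    obtain ⟨hu, hnd⟩ := List.nodup_cons.1 hnd
    have hne : ∀ x ∈ v :: vs, ∀ y ∈ v :: vs, ∀ e', F.Residual x y e' → e' ≠ e := by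
      rintro x hx y hy e' hxy rfl
      rcases Sym2.eq_iff.1 (huv.ends_eq.symm.trans hxy.ends_eq) with ⟨h, -⟩ | ⟨h, -⟩
      exacts [hu (h ▸ hx), hu (h ▸ hy)]
    have htail' : LabelledChain (F.push e u v).Residual (v :: vs) es :=
      htail.imp_of_mem fun x hx y hy e' _ hxy =>
        (Residual.congr (push_arc_of_ne (hne x hx y hy e' hxy))).2 hxy
    have he : e ∉ es := fun he => by
      obtain ⟨x, hx, y, hy, hxy⟩ := htail.exists_rel_of_mem he
      exact hne x hx y hy e hxy rfl
    obtain ⟨F', hnet, hoff, hon⟩ := exists_augment (F.push e u v) htail' hnd rfl hb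
    refine ⟨F', fun U => ?_, fun e' he' => ?_, fun e' he' hF => ?_⟩
    · rw [hnet, netOut_push huv]
      simp only [arcOut]
      ring
    · simp only [List.mem_cons, not_or] at he'
      rw [hoff e' he'.2, push_arc_of_ne he'.1]
    · rcases List.mem_cons.1 he' with rfl | he'
      · rw [hoff e' he, push_arc_self_of_ne_none hF]
      · have hne' : e' ≠ e := fun h => he (h ▸ he')
        exact hon e' he' (by rwa [push_arc_of_ne hne'])

/-- Max-flow min-cut, for unit capacities. -/
lemma exists_hasValue (hcut : ∀ U, a ∈ U → b ∉ U → k ≤ (G.edgeCut U).ncard) :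
    ∃ F : G.UnitFlow, F.HasValue a b k := by
  induction k with
  | zero => exact ⟨⟨fun _ => none, fun _ _ _ h => nomatch h⟩, fun U => by simp [netOut, arcOut]⟩
  | succ k ih =>
    obtain ⟨F, hF⟩ := ih fun U ha hb => (hcut U ha hb).trans' k.le_succ
    by_cases hreach : Relation.ReflTransGen (fun u v => ∃ e, F.Residual u v e) a b
    · obtain ⟨vs₀, es₀, h₀, ha, hb⟩ := LabelledChain.exists_of_reflTransGen hreach
      obtain ⟨vs, es, h, hnd, ha', hb', -⟩ := h₀.exists_nodup
      obtain ⟨F', hF', -⟩ := exists_augment F h hnd (ha'.trans ha) (hb'.trans hb)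
      exact ⟨F', fun U => by rw [hF', hF]; push_cast; ring⟩
    · -- the vertices reachable from `a` in the residual graph span a cut that is saturated
      set U := {v | Relation.ReflTransGen (fun u v => ∃ e, F.Residual u v e) a v}
      have hclosed : ∀ u v e, u ∈ U → F.Residual u v e → v ∈ U :=
        fun u v e hu huv => hu.tail ⟨e, huv⟩
      have hle := ncard_edgeCut_le_netOut hclosed
      rw [hF U, arcOut_eq_one (U := U) .refl hreach] at hle
      have := hcut U .refl hreach
      omega

/-- Flow decomposition. -/
lemma HasValue.exists_paths : ∀ {k : ℕ} {F : G.UnitFlow}, F.HasValue a b k →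
    ∃ (vs : Fin k → List G.V) (es : Fin k → List G.E),
      (∀ i, G.IsPathBetween a b (vs i) (es i)) ∧ (∀ i j, i ≠ j → ∀ e ∈ es i, e ∉ es j) ∧
      ∀ i, ∀ e ∈ es i, F.arc e ≠ none
  | 0, _, _ => ⟨finZeroElim, finZeroElim, finZeroElim, finZeroElim, finZeroElim⟩
  | k + 1, F, hF => by
    have hreach : Relation.ReflTransGen (fun u v => ∃ e, F.arc e = some (u, v)) a b := by
      by_contra hreach
      -- the vertices reachable from `a` along the flow span a cut that nothing enters
      set U := {v | Relation.ReflTransGen (fun u v => ∃ e, F.arc e = some (u, v)) a v}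
      have hle := netOut_nonpos (F := F) (U := U) fun u v e hu huv => hu.tail ⟨e, huv⟩
      rw [hF U, arcOut_eq_one (U := U) .refl hreach] at hle
      omega
    obtain ⟨vs₀, es₀, h₀, ha, hb⟩ := LabelledChain.exists_of_reflTransGen hreach
    obtain ⟨vs, es, h, hnd, ha', hb', -⟩ := h₀.exists_nodup
    have hpath : G.IsPathBetween a b vs es :=
      ⟨isWalk_iff_labelledChain.2 (h.imp_of_mem fun u _ v _ e _ => F.arc_ends e u v),
        hnd, ha'.trans ha, hb'.trans hb⟩
    have harc : ∀ e ∈ es, F.arc e ≠ none := fun e he => by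
      obtain ⟨u, -, v, -, huv⟩ := h.exists_rel_of_mem he
      simp [huv]
    -- cancelling the flow along the path leaves a flow of value `k`
    obtain ⟨F', hF', hoff, hon⟩ := exists_augment F
      (h.reverse.imp_of_mem fun u _ v _ e _ huv => .inr huv) (List.nodup_reverse.2 hnd)
      (by rw [List.head?_reverse, hb', hb]) (by rw [List.getLast?_reverse, ha', ha])
    obtain ⟨vss, ess, hpaths, hdisj, harcs⟩ :=
      HasValue.exists_paths (k := k) (F := F') fun U => by
        rw [hF', hF, arcOut_swap]; push_cast; ring
    have hfresh : ∀ i, ∀ e ∈ ess i, e ∉ es := fun i e hi he =>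
      harcs i e hi (hon e (List.mem_reverse.2 he) (harc e he))
    refine ⟨Fin.cons vs vss, Fin.cons es ess, Fin.cases hpath hpaths, ?_,
      Fin.cases harc fun i e he => ?_⟩
    · intro i j hij e hi hj
      induction i using Fin.cases <;> induction j using Fin.cases
      · exact hij rfl
      · exact hfresh _ e hj hi
      · exact hfresh _ e hi hj
      · exact hdisj _ _ (fun h => hij (congrArg Fin.succ h)) e hi hj
    · simp only [Fin.cons_succ] at he
      rw [← hoff e fun h => hfresh i e he (List.mem_reverse.1 h)]
      exact harcs i e he

end UnitFlow

/-- Menger's theorem for edge cuts. -/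
lemma edgeDisjointPaths_of_le_ncard_edgeCut {a b : G.V} {k : ℕ}
    (hcut : ∀ U, a ∈ U → b ∉ U → k ≤ (G.edgeCut U).ncard) : G.EdgeDisjointPaths a b k :=
  have ⟨_, hF⟩ := UnitFlow.exists_hasValue hcut
  have ⟨vs, es, hpaths, hdisj, _⟩ := hF.exists_paths
  ⟨vs, es, hpaths, hdisj⟩

end Flow

section Fan

variable {ι : Type} {x : ι → G.V} {b : G.V}

/-- `G` with a new vertex `none`, joined to `x i` by a separate edge for each `i`. -/
abbrev addSource (G : Multigraph) {ι : Type} [Finite ι] (x : ι → G.V) : Multigraph where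
  V := Option G.V
  E := G.E ⊕ ι
  finV := inferInstance
  finE := inferInstance
  ends := Sum.elim (fun e => (G.ends e).map some) (fun i => s(none, some (x i)))
  no_loops := by
    rintro (e | i)
    · simpa [Sym2.isDiag_map (Option.some_injective _)] using G.no_loops e
    · simp

variable [Finite ι]

lemma le_ncard_edgeCut_addSource (U : Set (Option G.V)) (hU : none ∈ U) :
    (G.edgeCut {v | some v ∈ U}).ncard + {i | some (x i) ∉ U}.ncard ≤
      ((G.addSource x).edgeCut U).ncard := by
  have hsub : Sum.inl '' G.edgeCut {v | some v ∈ U} ∪ Sum.inr '' {i | some (x i) ∉ U} ⊆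
      (G.addSource x).edgeCut U := by
    rintro _ (⟨e, ⟨p, q, hpq, hp, hq⟩, rfl⟩ | ⟨i, hi, rfl⟩)
    · exact ⟨some p, some q, by simp [hpq], hp, hq⟩
    · exact ⟨none, some (x i), rfl, hU, hi⟩
  calc _ = (Sum.inl '' G.edgeCut {v | some v ∈ U}).ncard +
        (Sum.inr '' {i | some (x i) ∉ U}).ncard := by
        rw [Set.ncard_image_of_injective _ Sum.inl_injective,
          Set.ncard_image_of_injective _ Sum.inr_injective]
    _ = _ := (Set.ncard_union_eq Set.disjoint_image_inl_image_inr).symm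
    _ ≤ _ := Set.ncard_le_ncard hsub

lemma exists_isWalk_of_isWalk_addSource {vs : List (G.addSource x).V}
    {es : List (G.addSource x).E} (h : (G.addSource x).IsWalk vs es) (hvs : none ∉ vs) :
    ∃ vsg esg, G.IsWalk vsg esg ∧ vs = vsg.map some ∧ es = esg.map Sum.inl := by
  induction h with
  | nil v =>
    obtain ⟨u, rfl⟩ : ∃ u, v = some u := Option.ne_none_iff_exists'.1 (by simpa [eq_comm] using hvs)
    exact ⟨[u], [], .nil u, rfl, rfl⟩
  | cons u e he _ ih =>
    obtain ⟨vsg, esg, hw, hvs', rfl⟩ := ih fun h => hvs (.tail _ h)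
    obtain ⟨u, rfl⟩ : ∃ u', u = some u' := Option.ne_none_iff_exists'.1 fun h => hvs (by simp [h])
    cases vsg with
    | nil => simp at hvs'
    | cons v vsg =>
      simp only [List.map_cons, List.cons.injEq] at hvs'
      obtain ⟨rfl, rfl⟩ := hvs'
      rcases e with g | i
      · refine ⟨u :: v :: vsg, g :: esg, .cons u g ?_ hw, rfl, rfl⟩
        simpa [← Sym2.map_mk, Sym2.map.injective (Option.some_injective _) |>.eq_iff] using he
      · simp at he

lemma exists_isPathBetween_of_isPathBetween_addSource {vs : List (G.addSource x).V}
    {es : List (G.addSource x).E} (h : (G.addSource x).IsPathBetween none (some b) vs es) :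
    ∃ i vsg esg, es = Sum.inr i :: esg.map Sum.inl ∧ G.IsPathBetween (x i) b vsg esg := by
  obtain ⟨hw, hnd, hhead, hlast⟩ := h
  obtain ⟨vs, rfl⟩ := List.head?_eq_some_iff.1 hhead
  cases hw with
  | nil => simp at hlast
  | @cons v vs es' _ e he hw =>
    have hnone : none ∉ v :: vs := (List.nodup_cons.1 hnd).1
    obtain ⟨vsg, esg, hwg, hvs, rfl⟩ := exists_isWalk_of_isWalk_addSource hw hnone
    rcases e with g | i
    · have := he ▸ Sym2.mem_mk_left none v
      simp [Sym2.mem_map] at this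
    · obtain rfl : v = some (x i) := by simpa using he.symm
      rw [List.getLast?_cons_cons, hvs, List.getLast?_map] at hlast
      have hb' : vsg.getLast? = some b := by simpa using hlast
      refine ⟨i, vsg, esg, rfl, hwg, ?_, ?_, hb'⟩
      · exact (List.nodup_map_iff (Option.some_injective _)).1 (hvs ▸ (List.nodup_cons.1 hnd).2)
      · have := congrArg List.head? hvs.symm
        simpa [List.head?_map] using this

lemma exists_edgeDisjoint_fan (x : ι → G.V) (b : G.V)
    (hcut : ∀ U : Set G.V, b ∉ U → Nat.card ι ≤ (G.edgeCut U).ncard + {i | x i ∉ U}.ncard) :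
    ∃ (vs : ι → List G.V) (es : ι → List G.E), (∀ i, G.IsPathBetween (x i) b (vs i) (es i)) ∧
      ∀ i j, i ≠ j → ∀ e ∈ es i, e ∉ es j := by
  obtain ⟨vs, es, hpaths, hdisj⟩ :=
    edgeDisjointPaths_of_le_ncard_edgeCut (G := G.addSource x) (a := none) (b := some b)
      fun U hU hbU => (hcut {v | some v ∈ U} hbU).trans (le_ncard_edgeCut_addSource U hU)
  choose σ vsg esg hes hpath using fun n => exists_isPathBetween_of_isPathBetween_addSource
    (hpaths n)
  -- each of the `Nat.card ι` paths uses its own source edge, so every source edge is used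
  have hσ : Function.Injective σ := fun n n' h => by
    by_contra hne
    exact hdisj n n' hne (Sum.inr (σ n)) (by simp [hes]) (by simp [hes, h])
  let σ' := Equiv.ofBijective σ ((Nat.bijective_iff_injective_and_card σ).2 ⟨hσ, by simp⟩)
  have hσ' : ∀ i, σ (σ'.symm i) = i := σ'.apply_symm_apply
  refine ⟨fun i => vsg (σ'.symm i), fun i => esg (σ'.symm i), fun i => ?_,
    fun i j hij e hi hj => ?_⟩
  · simpa [hσ'] using hpath (σ'.symm i)
  · exact hdisj _ _ (σ'.symm.injective.ne hij) (Sum.inl e) (by simp [hes, hi]) (by simp [hes, hj])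

end Fan

section Immersion

abbrev Dart (H : Multigraph) := {d : H.E × H.V // d.2 ∈ H.ends d.1}

/-- Each edge `f = xy` of `H` is routed along the path of the dart `(f, x)` to `b` and back
along the path of the dart `(f, y)`. -/
lemma immerses_of_paths_to_hub {H : Multigraph} (φ : H.V → G.V) (hφ : Function.Injective φ)
    (b : G.V) (vs : H.Dart → List G.V) (es : H.Dart → List G.E)
    (hpath : ∀ d, G.IsPathBetween (φ d.1.2) b (vs d) (es d))
    (hdisj : ∀ d d', d ≠ d' → ∀ e ∈ es d, e ∉ es d') : G.Immerses H := by
  have hroute : ∀ f : H.E, ∃ (ws : List G.V) (fs : List G.E),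
      (∃ x y, H.ends f = s(x, y) ∧ G.IsPathBetween (φ x) (φ y) ws fs) ∧
        ∀ e ∈ fs, ∃ d : H.Dart, d.1.1 = f ∧ e ∈ es d := by
    intro f
    obtain ⟨x, y, hxy⟩ : ∃ x y, H.ends f = s(x, y) := Sym2.exists.1 ⟨_, rfl⟩
    let dx : H.Dart := ⟨(f, x), by simp [hxy]⟩
    let dy : H.Dart := ⟨(f, y), by simp [hxy]⟩
    obtain ⟨ws, fs, hp, hsub⟩ := (hpath dx).exists_join (hpath dy)
    refine ⟨ws, fs, ⟨x, y, hxy, hp⟩, fun e he => ?_⟩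
    rcases List.mem_append.1 (hsub he) with h | h
    exacts [⟨dx, rfl, h⟩, ⟨dy, rfl, h⟩]
  choose ws fs hws hfs using hroute
  refine ⟨φ, hφ, ws, fs, hws, fun f f' hne e hf hf' => ?_⟩
  obtain ⟨d, rfl, hd⟩ := hfs f e hf
  obtain ⟨d', rfl, hd'⟩ := hfs f' e hf'
  exact hdisj d d' (fun h => hne (h ▸ rfl)) e hd hd'

lemma card_dart_completeGraph_le (t : ℕ) : Nat.card (completeGraph t).Dart ≤ t ^ 2 := by
  have hinj : Function.Injective fun d : (completeGraph t).Dart => (d.1.2, Sym2.Mem.other d.2) := by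
    rintro ⟨⟨f, i⟩, hf⟩ ⟨⟨f', i'⟩, hf'⟩ h
    simp only [Prod.mk.injEq] at h
    obtain ⟨rfl, h⟩ := h
    have : f = f' := Subtype.ext <| (Sym2.other_spec hf).symm.trans (h ▸ Sym2.other_spec hf')
    subst this
    rfl
  simpa [sq, completeGraph] using Nat.card_le_card_of_injective _ hinj

end Immersion

end Multigraph

open Multigraph in
theorem immerses_clique_of_highly_edge_connected_set_general (t : ℕ)
    (G : Multigraph) (X : Set G.V) (hX : X.ncard = t + 1)
    (hcut : ∀ x ∈ X, ∀ y ∈ X, x ≠ y →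
      ∀ U : Set G.V, x ∈ U → y ∉ U → t ^ 2 ≤ (G.edgeCut U).ncard) :
    G.Immerses (completeGraph t) := by
  -- the hub is `x 0`, the branch vertices are the `x i.succ`
  let x : Fin (t + 1) → G.V := fun i =>
    (Finite.equivFinOfCardEq (by rwa [Nat.card_coe_set_eq]) |>.symm i : X)
  have hxX : ∀ i, x i ∈ X := fun i => Subtype.prop _
  have hx : Function.Injective x := Subtype.val_injective.comp (Equiv.injective _)
  obtain ⟨vs, es, hpath, hdisj⟩ :=
    exists_edgeDisjoint_fan (fun d : (completeGraph t).Dart => x d.1.2.succ) (x 0) fun U hU => by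
      by_cases hbranch : ∃ i : Fin t, x i.succ ∈ U
      · obtain ⟨i, hi⟩ := hbranch
        have := hcut _ (hxX _) _ (hxX 0) (fun h => hU (h ▸ hi)) U hi hU
        have := card_dart_completeGraph_le t
        omega
      · push Not at hbranch
        refine le_add_left (le_of_eq ?_)
        rw [← Set.ncard_univ]
        exact congrArg Set.ncard
          (Set.eq_univ_of_forall fun d : (completeGraph t).Dart => hbranch d.1.2).symm
  exact immerses_of_paths_to_hub (fun i => x i.succ) (hx.comp (Fin.succ_injective _)) (x 0)
    vs es hpath hdisj

open Multigraph in
/-- if `G` has `t+1` vertices that are pairwise not separated by any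
edge cut of order less than `t²`, then `G` admits a weak immersion of `K_t`. -/
theorem immerses_clique_of_highly_edge_connected_set (t : ℕ) (ht : 1 ≤ t)
    (G : Multigraph) (X : Set G.V) (hX : X.ncard = t + 1)
    (hcut : ∀ x ∈ X, ∀ y ∈ X, x ≠ y →
      ∀ U : Set G.V, x ∈ U → y ∉ U → t ^ 2 ≤ (G.edgeCut U).ncard) :
    G.Immerses (completeGraph t) :=
  immerses_clique_of_highly_edge_connected_set_general t G X hX hcut
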